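/- arXiv:1205.2515 — 2 statements merged into one kernel-verified Lean document; each statement's English description precedes it below -/
import Mathlib

section
/- Let Y be a random vector in ℝ^q and let ‖·‖ be a norm on ℝ^q. Then for every p > 0, the minimum over unit vectors z (in the Euclidean norm) of (E|⟨z,Y⟩|^p)^{1/p} is at most (E‖Y‖^p)^{1/p} / E‖Y‖ · E|Y|, provided E‖Y‖ > 0. -/
open MeasureTheory ProbabilityTheory Real
open scoped ENNReal NNReal BigOperators RealInnerProductSpace Pointwise

noncomputable def stdGaussian (n : ℕ) : Measure (EuclideanSpace ℝ (Fin n)) :=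
  (Measure.pi fun _ : Fin n => gaussianReal 0 1).map
    (MeasurableEquiv.toLp 2 (Fin n → ℝ))

/-- A measure on a real vector space is log-concave if
`μ((1-θ)A + θB) ≥ μ(A)^(1-θ) μ(B)^θ` for all compact `A, B` and `θ ∈ (0,1)`. -/
def IsLogConcaveMeasure {E : Type*} [AddCommGroup E] [Module ℝ E]
    [TopologicalSpace E] [MeasurableSpace E] (μ : Measure E) : Prop :=
  ∀ A B : Set E, IsCompact A → IsCompact B → ∀ θ : ℝ, 0 < θ → θ < 1 →
    μ A ^ (1 - θ) * μ B ^ θ ≤ μ ((1 - θ) • A + θ • B)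

/-! Let `v` be a Euclidean unit vector at which `N` is maximal on the unit sphere, so that
`N ≤ N v * ‖·‖`. Comparing `v` with `v - ε • t` for small `ε > 0` shows that the tangent hyperplane of
the sphere at `v` supports the `N`-ball through `v`, i.e. `N v * |⟪v, t⟫| ≤ N t`. Hence
`(E |⟪v, Y⟫| ^ p) ^ (1 / p) ≤ (E N(Y) ^ p) ^ (1 / p) / N v`, while `E N(Y) ≤ N v * E ‖Y‖`. -/

open Filter Topology

section Seminorm

variable {E : Type*} [NormedAddCommGroup E]

theorem Seminorm.continuous_of_finiteDimensional [NormedSpace ℝ E] [FiniteDimensional ℝ E]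
    (N : Seminorm ℝ E) : Continuous N :=
  continuousOn_univ.mp (N.convexOn.continuousOn isOpen_univ)

theorem Seminorm.exists_norm_eq_one_forall_le_mul_norm [NormedSpace ℝ E] [FiniteDimensional ℝ E]
    [Nontrivial E] (N : Seminorm ℝ E) : ∃ v : E, ‖v‖ = 1 ∧ ∀ t, N t ≤ N v * ‖t‖ := by
  obtain ⟨v, hv, hmax⟩ := (isCompact_sphere (0 : E) 1).exists_isMaxOn
    (NormedSpace.sphere_nonempty.mpr zero_le_one) N.continuous_of_finiteDimensional.continuousOn
  refine ⟨v, by simpa using hv, fun t => ?_⟩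
  rcases eq_or_ne t 0 with rfl | ht
  · simp
  have hnorm : 0 < ‖t‖ := norm_pos_iff.mpr ht
  have hunit : N (‖t‖⁻¹ • t) ≤ N v := hmax (by simp [norm_smul, hnorm.ne'])
  calc N t = ‖t‖ * N (‖t‖⁻¹ • t) := by
        rw [map_smul_eq_mul, norm_inv, norm_norm, mul_inv_cancel_left₀ hnorm.ne']
    _ ≤ ‖t‖ * N v := by gcongr
    _ = N v * ‖t‖ := mul_comm _ _

variable [InnerProductSpace ℝ E]

theorem Seminorm.mul_inner_le_of_forall_le_mul_norm (N : Seminorm ℝ E) {v : E} (hv : ‖v‖ = 1)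
    (hmax : ∀ t, N t ≤ N v * ‖t‖) (t : E) : N v * ⟪v, t⟫ ≤ N t := by
  have hstep : ∀ ε > 0, N v * ⟪v, t⟫ - ε * (N v * ‖t‖ ^ 2 / 2) ≤ N t := by
    intro ε hε
    -- AM-GM `‖w‖ ≤ (1 + ‖w‖²) / 2` trades the norm of `w = v - ε • t` for its explicit square
    have hsq : ‖v - ε • t‖ ^ 2 = 1 - 2 * ε * ⟪v, t⟫ + ε ^ 2 * ‖t‖ ^ 2 := by
      rw [norm_sub_sq_real, hv, real_inner_smul_right, norm_smul, Real.norm_of_nonneg hε.le]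
      ring
    have hlin : ‖v - ε • t‖ ≤ 1 - ε * ⟪v, t⟫ + ε ^ 2 * ‖t‖ ^ 2 / 2 := by
      nlinarith [sq_nonneg (‖v - ε • t‖ - 1)]
    have htri : N v ≤ N v * ‖v - ε • t‖ + ε * N t := by
      calc N v = N ((v - ε • t) + ε • t) := by rw [sub_add_cancel]
        _ ≤ N (v - ε • t) + N (ε • t) := map_add_le_add N _ _
        _ ≤ N v * ‖v - ε • t‖ + ε * N t := by
          rw [map_smul_eq_mul, Real.norm_of_nonneg hε.le]
          exact add_le_add_left (hmax _) _
    have hscaled : ε * (N v * ⟪v, t⟫ - ε * (N v * ‖t‖ ^ 2 / 2)) ≤ ε * N t := by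
      nlinarith [mul_le_mul_of_nonneg_left hlin (apply_nonneg N v)]
    exact le_of_mul_le_mul_left hscaled hε
  have hlim : Tendsto (fun ε => N v * ⟪v, t⟫ - ε * (N v * ‖t‖ ^ 2 / 2)) (𝓝[>] 0)
      (𝓝 (N v * ⟪v, t⟫)) :=
    tendsto_nhdsWithin_of_tendsto_nhds (Continuous.tendsto' (by fun_prop) _ _ (by simp))
  exact le_of_tendsto hlim (eventually_nhdsWithin_of_forall hstep)

theorem Seminorm.abs_inner_mul_le_of_forall_le_mul_norm (N : Seminorm ℝ E) {v : E} (hv : ‖v‖ = 1)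
    (hmax : ∀ t, N t ≤ N v * ‖t‖) (t : E) : N v * |⟪v, t⟫| ≤ N t := by
  rcases abs_cases ⟪v, t⟫ with ⟨h, _⟩ | ⟨h, _⟩ <;> rw [h]
  · exact N.mul_inner_le_of_forall_le_mul_norm hv hmax t
  · simpa using N.mul_inner_le_of_forall_le_mul_norm hv hmax (-t)

end Seminorm

theorem integral_rpow_rpow_one_div_le_div {Ω : Type*} [MeasurableSpace Ω] {μ : Measure Ω}
    {f g : Ω → ℝ} {c p : ℝ} (hc : 0 < c) (hp : 0 < p) (hf : ∀ ω, 0 ≤ f ω)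
    (hfg : ∀ ω, c * f ω ≤ g ω) (hg : Integrable (fun ω => g ω ^ p) μ) :
    (∫ ω, f ω ^ p ∂μ) ^ (1 / p) ≤ (∫ ω, g ω ^ p ∂μ) ^ (1 / p) / c := by
  have hpow : ∀ ω, f ω ^ p ≤ g ω ^ p / c ^ p := fun ω => by
    rw [← Real.div_rpow ((mul_nonneg hc.le (hf ω)).trans (hfg ω)) hc.le]
    exact Real.rpow_le_rpow (hf ω) ((le_div_iff₀' hc).mpr (hfg ω)) hp.le
  have hint : ∫ ω, f ω ^ p ∂μ ≤ (∫ ω, g ω ^ p ∂μ) / c ^ p := by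
    rw [← integral_div]
    exact integral_mono_of_nonneg (ae_of_all _ fun ω => by have := hf ω; positivity)
      (hg.div_const _) (ae_of_all _ hpow)
  have hg0 : ∀ ω, 0 ≤ g ω := fun ω => (mul_nonneg hc.le (hf ω)).trans (hfg ω)
  calc (∫ ω, f ω ^ p ∂μ) ^ (1 / p) ≤ ((∫ ω, g ω ^ p ∂μ) / c ^ p) ^ (1 / p) :=
        Real.rpow_le_rpow (integral_nonneg fun ω => by have := hf ω; positivity) hint (by positivity)
    _ = (∫ ω, g ω ^ p ∂μ) ^ (1 / p) / c := by
        rw [Real.div_rpow (integral_nonneg fun ω => by have := hg0 ω; positivity) (by positivity),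
          ← Real.rpow_mul hc.le, mul_one_div_cancel hp.ne', Real.rpow_one]

theorem stmt0_general {q : ℕ} {Ω : Type*} [MeasurableSpace Ω] (P : Measure Ω) [IsProbabilityMeasure P]
    (Y : Ω → EuclideanSpace ℝ (Fin q))
    (N : EuclideanSpace ℝ (Fin q) → ℝ)
    (hNhom : ∀ (c : ℝ) (t), N (c • t) = |c| * N t)
    (hNadd : ∀ s t, N (s + t) ≤ N s + N t)
    (p : ℝ) (hp : 0 < p)
    (hint1 : Integrable (fun ω => N (Y ω) ^ p) P)
    (hint2 : Integrable (fun ω => ‖Y ω‖) P)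
    (hpos : 0 < ∫ ω, N (Y ω) ∂P) :
    (⨅ z : {z : EuclideanSpace ℝ (Fin q) // ‖z‖ = 1},
        (∫ ω, |⟪z.1, Y ω⟫| ^ p ∂P) ^ (1 / p)) ≤
      (∫ ω, N (Y ω) ^ p ∂P) ^ (1 / p) / (∫ ω, N (Y ω) ∂P) * ∫ ω, ‖Y ω‖ ∂P := by
  let Ns : Seminorm ℝ (EuclideanSpace ℝ (Fin q)) := Seminorm.of N hNadd hNhom
  have : Nontrivial (EuclideanSpace ℝ (Fin q)) := by
    by_contra h
    rw [not_nontrivial_iff_subsingleton] at h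
    have hY0 : ∀ ω, N (Y ω) = 0 := fun ω => by rw [Subsingleton.elim (Y ω) 0]; exact map_zero Ns
    simp [hY0] at hpos
  obtain ⟨v, hv, hmax⟩ := Ns.exists_norm_eq_one_forall_le_mul_norm
  have hmean : ∫ ω, N (Y ω) ∂P ≤ N v * ∫ ω, ‖Y ω‖ ∂P := by
    rw [← integral_const_mul]
    exact integral_mono_of_nonneg (ae_of_all _ fun _ => apply_nonneg Ns _)
      (hint2.const_mul _) (ae_of_all _ fun _ => hmax _)
  have hv0 : 0 < N v :=
    pos_of_mul_pos_left (hpos.trans_le hmean) (integral_nonneg fun _ => norm_nonneg _)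
  calc _ ≤ (∫ ω, |⟪v, Y ω⟫| ^ p ∂P) ^ (1 / p) := by
        refine ciInf_le ⟨0, ?_⟩ (⟨v, hv⟩ : {z : EuclideanSpace ℝ (Fin q) // ‖z‖ = 1})
        rintro _ ⟨z, rfl⟩
        positivity
    _ ≤ (∫ ω, N (Y ω) ^ p ∂P) ^ (1 / p) / N v :=
        integral_rpow_rpow_one_div_le_div hv0 hp (fun _ => abs_nonneg _)
          (fun ω => Ns.abs_inner_mul_le_of_forall_le_mul_norm hv hmax _) hint1
    _ ≤ _ := by
        rw [div_mul_eq_mul_div, div_le_div_iff₀ hv0 hpos, mul_assoc, mul_comm _ (N v)]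
        exact mul_le_mul_of_nonneg_left hmean
          (Real.rpow_nonneg (integral_nonneg fun _ => Real.rpow_nonneg (apply_nonneg Ns _) _) _)

/-- Lemma 2.1: for any norm N on ℝ^q,
min over the Euclidean unit sphere of (E|⟨z,Y⟩|^p)^{1/p} is at most
(E N(Y)^p)^{1/p} / E N(Y) · E|Y|. -/
theorem stmt0 {q : ℕ} {Ω : Type*} [MeasurableSpace Ω] (P : Measure Ω) [IsProbabilityMeasure P]
    (Y : Ω → EuclideanSpace ℝ (Fin q)) (hY : Measurable Y)
    (N : EuclideanSpace ℝ (Fin q) → ℝ)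
    (hN0 : ∀ t, 0 ≤ N t) (hNdef : ∀ t, N t = 0 → t = 0)
    (hNhom : ∀ (c : ℝ) (t), N (c • t) = |c| * N t)
    (hNadd : ∀ s t, N (s + t) ≤ N s + N t)
    (p : ℝ) (hp : 0 < p)
    (hint1 : Integrable (fun ω => N (Y ω) ^ p) P)
    (hint1' : Integrable (fun ω => N (Y ω)) P)
    (hint2 : Integrable (fun ω => ‖Y ω‖) P)
    (hpos : 0 < ∫ ω, N (Y ω) ∂P) :
    (⨅ z : {z : EuclideanSpace ℝ (Fin q) // ‖z‖ = 1},
        (∫ ω, |⟪z.1, Y ω⟫| ^ p ∂P) ^ (1 / p)) ≤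
      (∫ ω, N (Y ω) ^ p ∂P) ^ (1 / p) / (∫ ω, N (Y ω) ∂P) * ∫ ω, ‖Y ω‖ ∂P :=
  stmt0_general P Y N hNhom hNadd p hp hint1 hint2 hpos
end

section
/- Let g : ℝ^q → [0,∞) be an even log-concave probability density with g(0) = max g. Define K = {t ∈ ℝ^q : g(t) ≥ 25^{-q} g(0)}. Then K is a symmetric convex set with nonempty interior, and if Y has density g and ‖·‖_K denotes the gauge (Minkowski functional) of K, then P(‖Y‖_K ≤ 1/50) ≤ 2^{-q}. -/
open MeasureTheory ProbabilityTheory Real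
open scoped ENNReal NNReal BigOperators RealInnerProductSpace Pointwise

/-!
The superlevel set `K` of the log-concave density `g` is convex and symmetric. Log-concavity along
segments from the origin gives `g ≥ √(g 0 * g 0 / 25 ^ q) = g 0 / 5 ^ q` on `K / 2`, so, `g` having
mass one, `g 0 * vol K ≤ 10 ^ q`. The event `‖Y‖_K ≤ 1/50` forces `Y ∈ K / 25`, whose mass is at
most `g 0 * vol K / 25 ^ q ≤ (2 / 5) ^ q`. `K` has positive volume, hence nonempty interior, because
some superlevel set `{ε ≤ g}` has positive volume and a small dilate of it lies in `K`.
-/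

open Filter Topology Set Module

section LogConcave

variable {E : Type*} [AddCommGroup E] [Module ℝ E]

def IsLogConcaveFun (f : E → ℝ) : Prop :=
  ∀ x y : E, ∀ θ : ℝ, 0 ≤ θ → θ ≤ 1 → f x ^ (1 - θ) * f y ^ θ ≤ f ((1 - θ) • x + θ • y)

namespace IsLogConcaveFun

variable {f : E → ℝ}

theorem convex_superlevel (hf : IsLogConcaveFun f) {c : ℝ} (hc : 0 < c) :
    Convex ℝ {x | c ≤ f x} := by
  intro x hx y hy a b ha hb hab
  have hlc := hf x y b hb (by linarith)
  rw [show 1 - b = a by linarith] at hlc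
  calc c = c ^ a * c ^ b := by rw [← rpow_add hc, hab, rpow_one]
    _ ≤ f x ^ a * f y ^ b := by
      have : 0 ≤ f x := hc.le.trans hx
      gcongr <;> assumption
    _ ≤ _ := hlc

theorem smul_superlevel_subset (hf : IsLogConcaveFun f) (h0 : 0 ≤ f 0) {ε θ : ℝ} (hε : 0 ≤ ε)
    (hθ0 : 0 ≤ θ) (hθ1 : θ ≤ 1) :
    θ • {x | ε ≤ f x} ⊆ {x | f 0 ^ (1 - θ) * ε ^ θ ≤ f x} := by
  rintro _ ⟨x, hx, rfl⟩
  have hlc := hf 0 x θ hθ0 hθ1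
  rw [smul_zero, zero_add] at hlc
  calc f 0 ^ (1 - θ) * ε ^ θ ≤ f 0 ^ (1 - θ) * f x ^ θ := by gcongr; exact hx
    _ ≤ _ := hlc

theorem half_smul_superlevel_subset (hf : IsLogConcaveFun f) (h0 : 0 ≤ f 0) {c : ℝ}
    (hc : 0 ≤ c) : (2⁻¹ : ℝ) • {x | c ≤ f x} ⊆ {x | √(f 0 * c) ≤ f x} := by
  convert hf.smul_superlevel_subset h0 hc (θ := 2⁻¹) (by norm_num) (by norm_num) using 4
  rw [sqrt_eq_rpow, mul_rpow h0 hc]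
  norm_num

end IsLogConcaveFun

end LogConcave

section Density

variable {E Ω : Type*} [MeasurableSpace E] [MeasurableSpace Ω] {μ : Measure E} {P : Measure Ω}
  {Y : Ω → E} {f : E → ℝ}

theorem lintegral_density_eq_one [IsProbabilityMeasure P] (hY : Measurable Y)
    (hlaw : P.map Y = μ.withDensity fun t => ENNReal.ofReal (f t)) :
    ∫⁻ t, ENNReal.ofReal (f t) ∂μ = 1 := by
  have := Measure.isProbabilityMeasure_map (μ := P) hY.aemeasurable
  rw [← setLIntegral_univ, ← withDensity_apply _ MeasurableSet.univ, ← hlaw, measure_univ]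

theorem measure_setOf_density_pos_pos [IsProbabilityMeasure P] (hY : Measurable Y)
    (hfm : Measurable f) (hlaw : P.map Y = μ.withDensity fun t => ENNReal.ofReal (f t)) :
    0 < μ {t | 0 < f t} := by
  have hlint := lintegral_density_eq_one hY hlaw
  simpa [Function.support] using
    (lintegral_pos_iff_support hfm.ennreal_ofReal).1 (by simp [hlint])

theorem measure_preimage_le_of_density_le (hY : Measurable Y)
    (hlaw : P.map Y = μ.withDensity fun t => ENNReal.ofReal (f t)) {M : ℝ} (hM : ∀ t, f t ≤ M)
    {s : Set E} (hs : MeasurableSet s) : P (Y ⁻¹' s) ≤ ENNReal.ofReal M * μ s := by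
  rw [← Measure.map_apply hY hs, hlaw, withDensity_apply _ hs, ← setLIntegral_const]
  exact lintegral_mono fun t => ENNReal.ofReal_le_ofReal (hM t)

end Density

section Gauge

variable {E : Type*} [NormedAddCommGroup E] [NormedSpace ℝ E] {s : Set E}

theorem Convex.zero_mem_interior_of_neg_eq (hs : Convex ℝ s) (hneg : -s = s)
    (hint : (interior s).Nonempty) : (0 : E) ∈ interior s := by
  obtain ⟨x, hx⟩ := hint
  have hnegx : -x ∈ interior s := by
    have := (Homeomorph.neg E).preimage_interior s
    simp only [Homeomorph.coe_neg] at this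
    rw [← Set.mem_neg, ← Set.neg_preimage, this, Set.neg_preimage, hneg]
    exact hx
  have hmid := hs.interior hx hnegx (a := 2⁻¹) (b := 2⁻¹) (by norm_num) (by norm_num) (by norm_num)
  rwa [smul_neg, add_neg_cancel] at hmid

theorem setOf_gauge_le_subset_smul (hs : Convex ℝ s) (h0 : (0 : E) ∈ interior s) {a b : ℝ}
    (ha : 0 ≤ a) (hab : a < b) : {x | gauge s x ≤ a} ⊆ b • s := by
  have habs : Absorbent ℝ s := absorbent_nhds_zero (mem_interior_iff_mem_nhds.1 h0)
  rw [setOfPred_gauge_le_eq hs (interior_subset h0) habs ha]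
  exact iInter₂_subset b hab

end Gauge

section Measure

variable {E : Type*} [NormedAddCommGroup E] [NormedSpace ℝ E] [MeasurableSpace E] [BorelSpace E]
  [FiniteDimensional ℝ E] (μ : Measure E) [μ.IsAddHaarMeasure]

theorem Convex.interior_nonempty_of_measure_pos {s : Set E} (hs : Convex ℝ s) (h : 0 < μ s) :
    (interior s).Nonempty := by
  by_contra hint
  have hfr : s ⊆ frontier s := by
    rw [frontier, not_nonempty_iff_eq_empty.1 hint, sdiff_empty]
    exact subset_closure
  exact h.ne' (measure_mono_null hfr (hs.addHaar_frontier μ))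

namespace IsLogConcaveFun

variable {f : E → ℝ}

theorem measure_superlevel_pos (hf : IsLogConcaveFun f) {c : ℝ} (hc : 0 ≤ c) (hcf : c < f 0)
    (hpos : 0 < μ {x | 0 < f x}) : 0 < μ {x | c ≤ f x} := by
  have h0 : 0 < f 0 := hc.trans_lt hcf
  obtain ⟨ε, hε, hμε⟩ : ∃ ε > 0, 0 < μ {x | ε ≤ f x} := by
    by_contra! h
    have hsub : {x | 0 < f x} ⊆ ⋃ n : ℕ, {x | ((n : ℝ) + 1)⁻¹ ≤ f x} := fun x hx => by
      obtain ⟨n, hn⟩ := exists_nat_one_div_lt (show 0 < f x from hx)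
      exact mem_iUnion.2 ⟨n, by simpa [one_div] using hn.le⟩
    refine hpos.ne' (measure_mono_null hsub (measure_iUnion_null fun n => ?_))
    exact nonpos_iff_eq_zero.1 (h _ (by positivity))
  -- as `θ → 0⁺`, the lower bound `f 0 ^ (1 - θ) * ε ^ θ` on `f` over `θ • {ε ≤ f}` tends to `f 0`
  obtain ⟨θ, hθc, hθ0, hθ1⟩ : ∃ θ : ℝ, c < f 0 ^ (1 - θ) * ε ^ θ ∧ 0 < θ ∧ θ < 1 := by
    have hlim : Tendsto (fun θ : ℝ => f 0 ^ (1 - θ) * ε ^ θ) (𝓝[>] 0) (𝓝 (f 0)) := by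
      have : ContinuousAt (fun θ : ℝ => f 0 ^ (1 - θ) * ε ^ θ) 0 := by
        fun_prop (disch := positivity)
      simpa using this.tendsto.mono_left nhdsWithin_le_nhds
    exact ((hlim.eventually (lt_mem_nhds hcf)).and (Ioo_mem_nhdsGT zero_lt_one)).exists
  calc 0 < ENNReal.ofReal (θ ^ finrank ℝ E) * μ {x | ε ≤ f x} :=
        ENNReal.mul_pos (by simpa using pow_pos hθ0 _) hμε.ne'
    _ = μ (θ • {x | ε ≤ f x}) := (Measure.addHaar_smul_of_nonneg μ hθ0.le _).symm
    _ ≤ μ {x | c ≤ f x} := measure_mono fun x hx =>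
        hθc.le.trans (hf.smul_superlevel_subset h0.le hε.le hθ0.le hθ1.le hx)

theorem ofReal_sqrt_mul_measure_superlevel_le (hf : IsLogConcaveFun f) (hfm : Measurable f)
    (h0 : 0 ≤ f 0) {c : ℝ} (hc : 0 ≤ c) :
    ENNReal.ofReal (√(f 0 * c) / 2 ^ finrank ℝ E) * μ {x | c ≤ f x} ≤
      ∫⁻ x, ENNReal.ofReal (f x) ∂μ := by
  set a := ENNReal.ofReal √(f 0 * c)
  calc ENNReal.ofReal (√(f 0 * c) / 2 ^ finrank ℝ E) * μ {x | c ≤ f x}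
      = a * μ ((2⁻¹ : ℝ) • {x | c ≤ f x}) := by
        rw [Measure.addHaar_smul_of_nonneg μ (by norm_num), ← mul_assoc, ← ENNReal.ofReal_mul
          (sqrt_nonneg _), div_eq_mul_inv, inv_pow]
    _ ≤ a * μ {x | a ≤ ENNReal.ofReal (f x)} := by
        gcongr
        exact fun x hx => ENNReal.ofReal_le_ofReal (hf.half_smul_superlevel_subset h0 hc hx)
    _ ≤ ∫⁻ x, ENNReal.ofReal (f x) ∂μ := mul_meas_ge_le_lintegral hfm.ennreal_ofReal a

theorem measure_preimage_smul_superlevel_le {Ω : Type*} [MeasurableSpace Ω] {P : Measure Ω}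
    [IsProbabilityMeasure P] {Y : Ω → E} (hf : IsLogConcaveFun f) (hfm : Measurable f)
    (hmax : ∀ x, f x ≤ f 0) (h0 : 0 < f 0) (hY : Measurable Y)
    (hlaw : P.map Y = μ.withDensity fun t => ENNReal.ofReal (f t)) {a r : ℝ} (ha : 0 < a)
    (hr : 0 ≤ r) :
    P (Y ⁻¹' (r • {x | f 0 / a ≤ f x})) ≤ ENNReal.ofReal ((2 * r) ^ finrank ℝ E * √a) := by
  set n := finrank ℝ E
  set K := {x | f 0 / a ≤ f x}
  have hvol := hf.ofReal_sqrt_mul_measure_superlevel_le μ hfm h0.le (c := f 0 / a) (by positivity)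
  rw [lintegral_density_eq_one hY hlaw] at hvol
  have hsqrt : √(f 0 * (f 0 / a)) = f 0 / √a := by
    rw [← mul_div_assoc, sqrt_div' _ ha.le, sqrt_mul_self h0.le]
  calc P (Y ⁻¹' (r • K)) ≤ ENNReal.ofReal (f 0) * μ (r • K) :=
        measure_preimage_le_of_density_le hY hlaw hmax ((hfm measurableSet_Ici).const_smul₀ r)
    _ = ENNReal.ofReal ((2 * r) ^ n * √a) *
          (ENNReal.ofReal (√(f 0 * (f 0 / a)) / 2 ^ n) * μ K) := by
        rw [Measure.addHaar_smul_of_nonneg μ hr, ← mul_assoc, ← mul_assoc,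
          ← ENNReal.ofReal_mul h0.le, ← ENNReal.ofReal_mul (by positivity), hsqrt]
        congr 2
        field_simp
        rw [mul_pow]
        ring
    _ ≤ ENNReal.ofReal ((2 * r) ^ n * √a) := mul_le_of_le_one_right' hvol

end IsLogConcaveFun

end Measure

theorem stmt2_general {q : ℕ} (g : EuclideanSpace ℝ (Fin q) → ℝ)
    (hgeven : ∀ t, g (-t) = g t) (hgmeas : Measurable g)
    (hglc : ∀ x y : EuclideanSpace ℝ (Fin q), ∀ θ : ℝ, 0 ≤ θ → θ ≤ 1 →
      g x ^ (1 - θ) * g y ^ θ ≤ g ((1 - θ) • x + θ • y))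
    (hgmax : ∀ t, g t ≤ g 0)
    (K : Set (EuclideanSpace ℝ (Fin q)))
    (hK : K = {t | g 0 / 25 ^ q ≤ g t})
    {Ω : Type*} [MeasurableSpace Ω] (P : Measure Ω) [IsProbabilityMeasure P]
    (Y : Ω → EuclideanSpace ℝ (Fin q)) (hY : Measurable Y)
    (hlaw : Measure.map Y P = volume.withDensity fun t => ENNReal.ofReal (g t)) :
    Convex ℝ K ∧ K = -K ∧ (interior K).Nonempty ∧
      P {ω | gauge K (Y ω) ≤ 1 / 50} ≤ 2⁻¹ ^ q := by
  have hpos := measure_setOf_density_pos_pos hY hgmeas hlaw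
  have hg0 : 0 < g 0 := by
    obtain ⟨t, ht⟩ := nonempty_of_measure_ne_zero hpos.ne'
    exact ht.trans_le (hgmax t)
  have hconv : Convex ℝ K := hK ▸ IsLogConcaveFun.convex_superlevel hglc (by positivity)
  have hneg : -K = K := by ext t; simp [hK, hgeven]
  have hint : (interior K).Nonempty := by
    rcases Nat.eq_zero_or_pos q with rfl | hq
    · simp [Subsingleton.eq_univ_of_nonempty (s := K) ⟨0, by simp [hK]⟩]
    · refine hconv.interior_nonempty_of_measure_pos volume (hK ▸ ?_)
      exact IsLogConcaveFun.measure_superlevel_pos volume hglc (by positivity)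
        (div_lt_self hg0 (one_lt_pow₀ (by norm_num) hq.ne')) hpos
  refine ⟨hconv, hneg.symm, hint, ?_⟩
  calc P {ω | gauge K (Y ω) ≤ 1 / 50} ≤ P (Y ⁻¹' ((25⁻¹ : ℝ) • K)) :=
        measure_mono (preimage_mono (setOf_gauge_le_subset_smul hconv
          (hconv.zero_mem_interior_of_neg_eq hneg hint) (by norm_num) (by norm_num)))
    _ ≤ ENNReal.ofReal ((2 * 25⁻¹) ^ q * √(25 ^ q)) := by
        simpa only [hK, finrank_euclideanSpace_fin] using
          IsLogConcaveFun.measure_preimage_smul_superlevel_le volume hglc hgmeas hgmax hg0 hY hlaw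
            (a := 25 ^ q) (r := 25⁻¹) (by positivity) (by norm_num)
    _ ≤ 2⁻¹ ^ q := by
        rw [show √((25 : ℝ) ^ q) = 5 ^ q by norm_num [sqrt_eq_iff_mul_self_eq, ← mul_pow],
          ← mul_pow, ENNReal.ofReal_pow (by norm_num), ← ENNReal.ofReal_ofNat,
          ← ENNReal.ofReal_inv_of_pos (by norm_num)]
        gcongr
        norm_num

/-- For an even log-concave probability density g with max at 0,
K = {t : g(t) ≥ 25^{-q} g(0)} is symmetric convex with nonempty interior and
P(gauge_K(Y) ≤ 1/50) ≤ 2^{-q} when Y has density g. -/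
theorem stmt2 {q : ℕ} (g : EuclideanSpace ℝ (Fin q) → ℝ)
    (hg0 : ∀ t, 0 ≤ g t) (hgeven : ∀ t, g (-t) = g t) (hgmeas : Measurable g)
    (hglc : ∀ x y : EuclideanSpace ℝ (Fin q), ∀ θ : ℝ, 0 ≤ θ → θ ≤ 1 →
      g x ^ (1 - θ) * g y ^ θ ≤ g ((1 - θ) • x + θ • y))
    (hgint : ∫ t, g t = 1)
    (hgmax : ∀ t, g t ≤ g 0)
    (K : Set (EuclideanSpace ℝ (Fin q)))
    (hK : K = {t | g 0 / 25 ^ q ≤ g t})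
    {Ω : Type*} [MeasurableSpace Ω] (P : Measure Ω) [IsProbabilityMeasure P]
    (Y : Ω → EuclideanSpace ℝ (Fin q)) (hY : Measurable Y)
    (hlaw : Measure.map Y P = volume.withDensity fun t => ENNReal.ofReal (g t)) :
    Convex ℝ K ∧ K = -K ∧ (interior K).Nonempty ∧
      P {ω | gauge K (Y ω) ≤ 1 / 50} ≤ 2⁻¹ ^ q :=
  stmt2_general g hgeven hgmeas hglc hgmax K hK P Y hY hlaw
end
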